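/- Let V be a finite-dimensional real vector space, A : V³ → ℝ trilinear, B : V⁴ → ℝ quadrilinear satisfying B(a,b,c,d) = −B(b,a,c,d), B(a,b,c,d) = −B(a,b,d,c) and B(a,b,c,d) = B(c,d,a,b), P a symmetric bilinear form on V*, and n ∈ V. Fix z ∈ ℝ with z ≠ 0 and ζ ∈ V, and define the gauge-transformed objects: A′(b,c,d) := z(A(b,c,d) + B(ζ,b,c,d)); B′ := B; n′ := z⁻¹n; and P′(α,β) := P(α,β) − α(ζ)β(n) − β(ζ)α(n) for α, β ∈ V*. Let ℛ, J, H be the constraint tensor and its contractions built from (A,B,P,n), and ℛ′, J′, H′ those built from (A′,B′,P′,n′). Then: (1) ℛ′ = ℛ; (2) J′ = z⁻¹ J; (3) H′ = H + J(ζ). -/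

import Mathlib

/-- The full contraction `⟨T, P⟩` of a bilinear form `T` on `V` with a bilinear form `P` on
`V*`: the trace of the endomorphism `P̂ ∘ T̂` of `V`, where `T̂ : V → V*` is `v ↦ T(v,·)` and
`P̂ : V* → V` is the linear map determined by `β(P̂(α)) = P(α,β)` for all `β ∈ V*`. -/
noncomputable def contr {V : Type*} [AddCommGroup V] [Module ℝ V] [FiniteDimensional ℝ V]
    (P : Module.Dual ℝ V →ₗ[ℝ] Module.Dual ℝ V →ₗ[ℝ] ℝ) :
    (V →ₗ[ℝ] Module.Dual ℝ V) →ₗ[ℝ] ℝ :=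
  (LinearMap.trace ℝ V).comp
    (LinearMap.llcomp ℝ V (Module.Dual ℝ V) V
      ((Module.evalEquiv ℝ V).symm.toLinearMap.comp P))

/-- For a quadrilinear map `B` and `a b : V`, the bilinear form `B(a,·,b,·) : (c,d) ↦ B(a,c,b,d)`. -/
noncomputable def sliceB {V : Type*} [AddCommGroup V] [Module ℝ V]
    (B : V →ₗ[ℝ] V →ₗ[ℝ] V →ₗ[ℝ] V →ₗ[ℝ] ℝ) (a b : V) :
    V →ₗ[ℝ] Module.Dual ℝ V :=
  LinearMap.mk₂ ℝ (fun c d => B a c b d)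
    (fun c c' d => by simp)
    (fun r c d => by simp)
    (fun c d d' => by simp)
    (fun r c d => by simp)

lemma sliceB_add_left {V : Type*} [AddCommGroup V] [Module ℝ V]
    (B : V →ₗ[ℝ] V →ₗ[ℝ] V →ₗ[ℝ] V →ₗ[ℝ] ℝ) (a a' b : V) :
    sliceB B (a + a') b = sliceB B a b + sliceB B a' b := by
  ext c d; simp [sliceB]

lemma sliceB_smul_left {V : Type*} [AddCommGroup V] [Module ℝ V]
    (B : V →ₗ[ℝ] V →ₗ[ℝ] V →ₗ[ℝ] V →ₗ[ℝ] ℝ) (r : ℝ) (a b : V) :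
    sliceB B (r • a) b = r • sliceB B a b := by
  ext c d; simp [sliceB]

lemma sliceB_add_right {V : Type*} [AddCommGroup V] [Module ℝ V]
    (B : V →ₗ[ℝ] V →ₗ[ℝ] V →ₗ[ℝ] V →ₗ[ℝ] ℝ) (a b b' : V) :
    sliceB B a (b + b') = sliceB B a b + sliceB B a b' := by
  ext c d; simp [sliceB]

lemma sliceB_smul_right {V : Type*} [AddCommGroup V] [Module ℝ V]
    (B : V →ₗ[ℝ] V →ₗ[ℝ] V →ₗ[ℝ] V →ₗ[ℝ] ℝ) (r : ℝ) (a b : V) :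
    sliceB B a (r • b) = r • sliceB B a b := by
  ext c d; simp [sliceB]

/-- The constraint tensor `ℛ(a,b) := ⟨B(a,·,b,·), P⟩ − A(b,a,n) − A(a,b,n)`, as a bilinear
form on `V`. -/
noncomputable def constraintTensor {V : Type*} [AddCommGroup V] [Module ℝ V]
    [FiniteDimensional ℝ V]
    (A : V →ₗ[ℝ] V →ₗ[ℝ] V →ₗ[ℝ] ℝ)
    (B : V →ₗ[ℝ] V →ₗ[ℝ] V →ₗ[ℝ] V →ₗ[ℝ] ℝ)
    (P : Module.Dual ℝ V →ₗ[ℝ] Module.Dual ℝ V →ₗ[ℝ] ℝ) (n : V) :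
    V →ₗ[ℝ] V →ₗ[ℝ] ℝ :=
  LinearMap.mk₂ ℝ (fun a b => contr P (sliceB B a b) - A b a n - A a b n)
    (fun a a' b => by
      simp only [sliceB_add_left, map_add, LinearMap.add_apply]
      ring)
    (fun r a b => by
      simp only [sliceB_smul_left, map_smul, LinearMap.smul_apply, smul_eq_mul]
      ring)
    (fun a b b' => by
      simp only [sliceB_add_right, map_add, LinearMap.add_apply]
      ring)
    (fun r a b => by
      simp only [sliceB_smul_right, map_smul, LinearMap.smul_apply, smul_eq_mul]
      ring)

/-- The gauge-transformed `P`: `P′(α,β) = P(α,β) − α(ζ)β(n) − β(ζ)α(n)`. -/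
noncomputable def gaugeP {V : Type*} [AddCommGroup V] [Module ℝ V]
    (P : Module.Dual ℝ V →ₗ[ℝ] Module.Dual ℝ V →ₗ[ℝ] ℝ) (ζ n : V) :
    Module.Dual ℝ V →ₗ[ℝ] Module.Dual ℝ V →ₗ[ℝ] ℝ :=
  LinearMap.mk₂ ℝ (fun α β => P α β - α ζ * β n - β ζ * α n)
    (fun α α' β => by
      simp only [map_add, LinearMap.add_apply]
      ring)
    (fun r α β => by
      simp only [map_smul, LinearMap.smul_apply, smul_eq_mul]
      ring)
    (fun α β β' => by
      simp only [map_add, LinearMap.add_apply]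
      ring)
    (fun r α β => by
      simp only [map_smul, LinearMap.smul_apply, smul_eq_mul]
      ring)

/-!
Contracting a bilinear form `S` with the rank-two correction `P′ − P` only produces
`−S(n,ζ) − S(ζ,n)`. For `S = B(a,·,b,·)` these are `−B(a,n,b,ζ)` and `−B(a,ζ,b,n)`, which by the
symmetries of `B` equal `+B(ζ,b,a,n)` and `+B(ζ,a,b,n)`: exactly what the shift of `A` by
`B(ζ,·,·,·)` removes, the factor `z` being cancelled by `n′ = z⁻¹n`. Hence `ℛ′ = ℛ`, so
`J′ = ℛ(z⁻¹n,·) = z⁻¹J` and `H′ = −½⟨ℛ,P′⟩ = H + ½(ℛ(n,ζ) + ℛ(ζ,n)) = H + J(ζ)`, because `ℛ` is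
symmetric when `P` is.
-/

theorem sliceB_apply {V : Type*} [AddCommGroup V] [Module ℝ V]
    (B : V →ₗ[ℝ] V →ₗ[ℝ] V →ₗ[ℝ] V →ₗ[ℝ] ℝ) (a b c d : V) : sliceB B a b c d = B a c b d :=
  rfl

section Contraction

variable {V : Type*} [AddCommGroup V] [Module ℝ V] [FiniteDimensional ℝ V]

theorem contr_apply (P : Module.Dual ℝ V →ₗ[ℝ] Module.Dual ℝ V →ₗ[ℝ] ℝ)
    (T : V →ₗ[ℝ] Module.Dual ℝ V) :
    contr P T = LinearMap.trace ℝ V ((Module.evalEquiv ℝ V).symm.toLinearMap ∘ₗ P ∘ₗ T) :=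
  rfl

theorem contr_smulRight (P : Module.Dual ℝ V →ₗ[ℝ] Module.Dual ℝ V →ₗ[ℝ] ℝ)
    (f g : Module.Dual ℝ V) :
    contr P (f.smulRight g) = P g f := by
  rw [contr_apply, show (Module.evalEquiv ℝ V).symm.toLinearMap ∘ₗ P ∘ₗ f.smulRight g
      = f.smulRight ((Module.evalEquiv ℝ V).symm (P g)) by ext; simp,
    LinearMap.trace_smulRight, Module.apply_evalEquiv_symm_apply]

theorem contr_eq_sum {ι : Type*} [Fintype ι] (b : Module.Basis ι ℝ V)
    (P : Module.Dual ℝ V →ₗ[ℝ] Module.Dual ℝ V →ₗ[ℝ] ℝ) (T : V →ₗ[ℝ] Module.Dual ℝ V) :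
    contr P T = ∑ i, ∑ j, T (b i) (b j) * P (b.coord j) (b.coord i) := by
  have hT : T = ∑ i, ∑ j, T (b i) (b j) • (b.coord i).smulRight (b.coord j) := by
    refine LinearMap.ext_basis b b fun k l => ?_
    classical
    simp [Finsupp.single_apply]
  conv_lhs => rw [hT]
  simp only [map_sum, map_smul, contr_smulRight, smul_eq_mul]

theorem contr_flip {P : Module.Dual ℝ V →ₗ[ℝ] Module.Dual ℝ V →ₗ[ℝ] ℝ}
    (hP : ∀ α β, P α β = P β α) (T : V →ₗ[ℝ] Module.Dual ℝ V) :
    contr P T.flip = contr P T := by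
  let b := Module.Free.chooseBasis ℝ V
  rw [contr_eq_sum b, contr_eq_sum b, Finset.sum_comm]
  simp only [LinearMap.flip_apply, hP]

theorem contr_gaugeP (P : Module.Dual ℝ V →ₗ[ℝ] Module.Dual ℝ V →ₗ[ℝ] ℝ) (ζ n : V)
    (T : V →ₗ[ℝ] Module.Dual ℝ V) :
    contr (gaugeP P ζ n) T = contr P T - T n ζ - T ζ n := by
  let e := Module.evalEquiv ℝ V
  have hcorr : e.symm.toLinearMap ∘ₗ gaugeP P ζ n ∘ₗ T
      = e.symm.toLinearMap ∘ₗ P ∘ₗ T - (T.flip ζ).smulRight n - (T.flip n).smulRight ζ := by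
    ext v
    apply e.injective
    ext β
    simp only [e, gaugeP, LinearMap.coe_comp, LinearEquiv.coe_coe, Function.comp_apply,
      LinearEquiv.apply_symm_apply, LinearMap.mk₂_apply, LinearMap.sub_apply,
      LinearMap.coe_smulRight, LinearMap.flip_apply, Module.evalEquiv_apply, map_sub, map_smul,
      Module.Dual.eval_apply, LinearMap.smul_apply, smul_eq_mul]
    ring
  rw [contr_apply, contr_apply, hcorr, map_sub, map_sub, LinearMap.trace_smulRight,
    LinearMap.trace_smulRight, LinearMap.flip_apply, LinearMap.flip_apply]

end Contraction

section ConstraintTensor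

variable {V : Type*} [AddCommGroup V] [Module ℝ V] [FiniteDimensional ℝ V]
  (A : V →ₗ[ℝ] V →ₗ[ℝ] V →ₗ[ℝ] ℝ) {B : V →ₗ[ℝ] V →ₗ[ℝ] V →ₗ[ℝ] V →ₗ[ℝ] ℝ}
  (P : Module.Dual ℝ V →ₗ[ℝ] Module.Dual ℝ V →ₗ[ℝ] ℝ) (n : V)

theorem constraintTensor_apply (a b : V) :
    constraintTensor A B P n a b = contr P (sliceB B a b) - A b a n - A a b n :=
  rfl

theorem constraintTensor_comm (hB : ∀ a b c d, B a b c d = B c d a b)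
    (hP : ∀ α β, P α β = P β α) (a b : V) :
    constraintTensor A B P n a b = constraintTensor A B P n b a := by
  have hslice : sliceB B a b = (sliceB B b a).flip := by
    ext c d
    exact hB a c b d
  rw [constraintTensor_apply, constraintTensor_apply, hslice, contr_flip hP]
  ring

theorem constraintTensor_gauge (hB₂ : ∀ a b c d, B a b c d = - B a b d c)
    (hB₃ : ∀ a b c d, B a b c d = B c d a b) {z : ℝ} (hz : z ≠ 0) (ζ : V) :
    constraintTensor (z • (A + B ζ)) B (gaugeP P ζ n) (z⁻¹ • n) = constraintTensor A B P n := by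
  ext a b
  have h₁ : B ζ b a n = - B a n b ζ := by rw [hB₃, hB₂]
  have h₂ : B ζ a b n = - B a ζ b n := by rw [hB₃, hB₂, hB₃]
  simp only [constraintTensor_apply, contr_gaugeP, sliceB_apply, LinearMap.smul_apply,
    LinearMap.add_apply, map_smul, smul_eq_mul, h₁, h₂]
  field_simp
  ring

end ConstraintTensor

theorem stmt_8_general {V : Type*} [AddCommGroup V] [Module ℝ V] [FiniteDimensional ℝ V]
    (A : V →ₗ[ℝ] V →ₗ[ℝ] V →ₗ[ℝ] ℝ)
    (B : V →ₗ[ℝ] V →ₗ[ℝ] V →ₗ[ℝ] V →ₗ[ℝ] ℝ)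
    (hB2 : ∀ a b c d : V, B a b c d = - B a b d c)
    (hB3 : ∀ a b c d : V, B a b c d = B c d a b)
    (P : Module.Dual ℝ V →ₗ[ℝ] Module.Dual ℝ V →ₗ[ℝ] ℝ)
    (hPsymm : ∀ α β : Module.Dual ℝ V, P α β = P β α)
    (n : V) (z : ℝ) (hz : z ≠ 0) (ζ : V) :
    -- (1) ℛ′ = ℛ
    (∀ a b : V,
      constraintTensor (z • (A + B ζ)) B (gaugeP P ζ n) (z⁻¹ • n) a b
        = constraintTensor A B P n a b) ∧
    -- (2) J′ = z⁻¹ J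
    (∀ b : V,
      constraintTensor (z • (A + B ζ)) B (gaugeP P ζ n) (z⁻¹ • n) (z⁻¹ • n) b
        = z⁻¹ * constraintTensor A B P n n b) ∧
    -- (3) H′ = H + J(ζ)
    (-(1 / 2 : ℝ) * contr (gaugeP P ζ n)
        (constraintTensor (z • (A + B ζ)) B (gaugeP P ζ n) (z⁻¹ • n))
      = -(1 / 2 : ℝ) * contr P (constraintTensor A B P n)
        + constraintTensor A B P n n ζ) := by
  have hR := constraintTensor_gauge A P n hB2 hB3 hz ζ
  refine ⟨fun a b => by rw [hR], fun b => ?_, ?_⟩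
  · rw [hR, map_smul, LinearMap.smul_apply, smul_eq_mul]
  · rw [hR, contr_gaugeP, constraintTensor_comm A P n hB3 hPsymm ζ n]
    ring

/-- Gauge covariance of the constraint tensor and its contractions: with
`A′ := z(A + i_ζ B)`, `B′ := B`, `n′ := z⁻¹n`, `P′(α,β) := P(α,β) − α(ζ)β(n) − β(ζ)α(n)`,
and `ℛ, J := ℛ(n,·), H := −½⟨ℛ,P⟩` (resp. the primed objects) built from `(A,B,P,n)`
(resp. `(A′,B′,P′,n′)`), one has `ℛ′ = ℛ`, `J′ = z⁻¹J` and `H′ = H + J(ζ)`. -/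
theorem stmt_8 {V : Type*} [AddCommGroup V] [Module ℝ V] [FiniteDimensional ℝ V]
    (A : V →ₗ[ℝ] V →ₗ[ℝ] V →ₗ[ℝ] ℝ)
    (B : V →ₗ[ℝ] V →ₗ[ℝ] V →ₗ[ℝ] V →ₗ[ℝ] ℝ)
    (hB1 : ∀ a b c d : V, B a b c d = - B b a c d)
    (hB2 : ∀ a b c d : V, B a b c d = - B a b d c)
    (hB3 : ∀ a b c d : V, B a b c d = B c d a b)
    (P : Module.Dual ℝ V →ₗ[ℝ] Module.Dual ℝ V →ₗ[ℝ] ℝ)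
    (hPsymm : ∀ α β : Module.Dual ℝ V, P α β = P β α)
    (n : V) (z : ℝ) (hz : z ≠ 0) (ζ : V) :
    -- (1) ℛ′ = ℛ
    (∀ a b : V,
      constraintTensor (z • (A + B ζ)) B (gaugeP P ζ n) (z⁻¹ • n) a b
        = constraintTensor A B P n a b) ∧
    -- (2) J′ = z⁻¹ J
    (∀ b : V,
      constraintTensor (z • (A + B ζ)) B (gaugeP P ζ n) (z⁻¹ • n) (z⁻¹ • n) b
        = z⁻¹ * constraintTensor A B P n n b) ∧
    -- (3) H′ = H + J(ζ)
    (-(1 / 2 : ℝ) * contr (gaugeP P ζ n)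
        (constraintTensor (z • (A + B ζ)) B (gaugeP P ζ n) (z⁻¹ • n))
      = -(1 / 2 : ℝ) * contr P (constraintTensor A B P n)
        + constraintTensor A B P n n ζ) :=
  stmt_8_general A B hB2 hB3 P hPsymm n z hz ζ
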